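/- (From second differences to first differences.) Let 1 < p < ∞, 0 < α, h > 0, 0 ≤ M < ∞, let Z be a left invariant vector field on H^n, and let v ∈ L^p(H^n). If sup_{0<|s|≤h} ‖Δ²_{Z,s} v‖_{L^p}/|s|^α ≤ M, then there exist positive constants c and h' such that sup_{0<|s|≤h'} ‖Δ_{Z,s} v‖_{L^p}/|s|^β ≤ c(‖v‖_{L^p} + M), where β = α if 0 < α < 1, β can be taken to be any number in (0,1) if α = 1, and β = 1 if α > 1. -/

import Mathlib

open MeasureTheory Real

noncomputable section

/-- Points of the Heisenberg group ℍⁿ: horizontal coordinates and vertical coordinate. -/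
abbrev Hpt (n : ℕ) : Type := (Fin (2 * n) → ℝ) × ℝ

/-- Embedding of the first block of indices `{1,…,n}` into `{1,…,2n}`. -/
def finL (n : ℕ) (i : Fin n) : Fin (2 * n) := ⟨(i : ℕ), by have := i.isLt; omega⟩

/-- Embedding of the second block of indices `{n+1,…,2n}` into `{1,…,2n}`. -/
def finR (n : ℕ) (i : Fin n) : Fin (2 * n) := ⟨n + (i : ℕ), by have := i.isLt; omega⟩

/-- Heisenberg group multiplication. -/
def Hmul (n : ℕ) (x y : Hpt n) : Hpt n :=
  (x.1 + y.1,
    x.2 + y.2 + (1 / 2) * ∑ i : Fin n,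
      (x.1 (finL n i) * y.1 (finR n i) - x.1 (finR n i) * y.1 (finL n i)))

/-- Heisenberg group inverse. -/
def Hinv (n : ℕ) (x : Hpt n) : Hpt n := (-x.1, -x.2)

/-- Korányi gauge. -/
def Knorm (n : ℕ) (x : Hpt n) : ℝ :=
  ((∑ i, (x.1 i) ^ 2) ^ 2 + x.2 ^ 2) ^ ((1 : ℝ) / 4)

/-- Korányi distance. -/
def Kdist (n : ℕ) (x y : Hpt n) : ℝ := Knorm n (Hmul n (Hinv n x) y)

/-- Korányi ball. -/
def Kball (n : ℕ) (x₀ : Hpt n) (r : ℝ) : Set (Hpt n) := {x | Kdist n x₀ x < r}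

/-- Coefficient of `∂ₜ` in the horizontal vector field `X_j`. -/
def xcoef (n : ℕ) (x : Hpt n) (j : Fin (2 * n)) : ℝ :=
  if h : (j : ℕ) < n then -(x.1 ⟨n + (j : ℕ), by omega⟩) / 2
  else x.1 ⟨(j : ℕ) - n, by have := j.isLt; omega⟩ / 2

/-- The horizontal vector field `X_j` applied to a differentiable function. -/
def Xop (n : ℕ) (j : Fin (2 * n)) (φ : Hpt n → ℝ) (x : Hpt n) : ℝ :=
  fderiv ℝ φ x (Pi.single j 1, 0) + xcoef n x j * fderiv ℝ φ x (0, 1)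

/-- The vertical vector field `T = ∂ₜ` applied to a differentiable function. -/
def Tvf (n : ℕ) (φ : Hpt n → ℝ) (x : Hpt n) : ℝ := fderiv ℝ φ x (0, 1)

/-- A general left invariant vector field with constant coefficient vector `c`. -/
def Zop (n : ℕ) (c : Hpt n) (φ : Hpt n → ℝ) (x : Hpt n) : ℝ :=
  (∑ l, c.1 l * Xop n l φ x) + c.2 * Tvf n φ x

/-- The coefficient of `T` in the commutator `[Y,Z]` of left invariant fields. -/
def commCoef (n : ℕ) (cY cZ : Hpt n) : ℝ :=
  ∑ i : Fin n, (cY.1 (finL n i) * cZ.1 (finR n i) - cY.1 (finR n i) * cZ.1 (finL n i))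

/-- Right translation `x ↦ x ∘ e^{sZ}` associated to the left invariant field `Z`. -/
def zTrans (n : ℕ) (c : Hpt n) (s : ℝ) (x : Hpt n) : Hpt n :=
  Hmul n x (s • c.1, s * c.2)

/-- Vertical translation `x ↦ x e^{sT}`. -/
def tTrans (n : ℕ) (s : ℝ) (x : Hpt n) : Hpt n := (x.1, x.2 + s)

/-- First order Nirenberg difference along `Z`. -/
def delta1 (n : ℕ) (c : Hpt n) (s : ℝ) (v : Hpt n → ℝ) (x : Hpt n) : ℝ :=
  v (zTrans n c s x) - v x

/-- Second order Nirenberg difference along `Z`. -/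
def delta2 (n : ℕ) (c : Hpt n) (s : ℝ) (v : Hpt n → ℝ) (x : Hpt n) : ℝ :=
  v (zTrans n c s x) + v (zTrans n c (-s) x) - 2 * v x

/-- Fractional difference quotient of order `α` along `Z` (signed denominator). -/
def DZ (n : ℕ) (c : Hpt n) (s α : ℝ) (v : Hpt n → ℝ) (x : Hpt n) : ℝ :=
  (v (zTrans n c s x) - v x) / (Real.sign s * |s| ^ α)

/-- Fractional difference quotient of order `γ` along `T` for scalar functions. -/
def DTs (n : ℕ) (s γ : ℝ) (v : Hpt n → ℝ) (x : Hpt n) : ℝ :=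
  (v (tTrans n s x) - v x) / (Real.sign s * |s| ^ γ)

/-- Fractional difference quotient of order `γ` along `T` for `ℝ^N`-valued functions. -/
def DTv (n N : ℕ) (s γ : ℝ) (u : Hpt n → Fin N → ℝ) (x : Hpt n) (i : Fin N) : ℝ :=
  (u (tTrans n s x) i - u x i) / (Real.sign s * |s| ^ γ)

/-- Euclidean norm of a vector. -/
def vnorm {N : ℕ} (v : Fin N → ℝ) : ℝ := Real.sqrt (∑ i, (v i) ^ 2)

/-- Frobenius norm of a matrix. -/
def mnorm {N M : ℕ} (P : Fin N → Fin M → ℝ) : ℝ := Real.sqrt (∑ i, ∑ j, (P i j) ^ 2)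

/-- Frobenius inner product of matrices. -/
def minner {N M : ℕ} (P Q : Fin N → Fin M → ℝ) : ℝ := ∑ i, ∑ j, P i j * Q i j

/-- Frobenius norm of a 3-tensor. -/
def t3norm {N M L : ℕ} (v : Fin N → Fin M → Fin L → ℝ) : ℝ :=
  Real.sqrt (∑ i, ∑ j, ∑ l, (v i j l) ^ 2)

/-- A smooth test function compactly supported in `Ω`. -/
structure IsTest (n : ℕ) (Ω : Set (Hpt n)) (φ : Hpt n → ℝ) : Prop where
  smooth : ContDiff ℝ (⊤ : ℕ∞) φ
  cpt : HasCompactSupport φ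
  supp : tsupport φ ⊆ Ω

/-- `g` is the weak derivative of `u` along the first order operator `Z` on `Ω`. -/
def HasWeakDerivAlong (n : ℕ) (Z : (Hpt n → ℝ) → Hpt n → ℝ) (Ω : Set (Hpt n))
    (u g : Hpt n → ℝ) : Prop :=
  ∀ φ : Hpt n → ℝ, IsTest n Ω φ → ∫ x, g x * φ x = -∫ x, u x * Z φ x

/-- Componentwise weak derivative for `ℝ^N`-valued functions. -/
def HasWeakDerivAlongV (n N : ℕ) (Z : (Hpt n → ℝ) → Hpt n → ℝ) (Ω : Set (Hpt n))
    (u g : Hpt n → Fin N → ℝ) : Prop :=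
  ∀ i : Fin N, HasWeakDerivAlong n Z Ω (fun x => u x i) (fun x => g x i)

/-- `Du` is the weak horizontal gradient of `u` on `Ω`. -/
def IsHGrad (n N : ℕ) (Ω : Set (Hpt n)) (u : Hpt n → Fin N → ℝ)
    (Du : Hpt n → Fin N → Fin (2 * n) → ℝ) : Prop :=
  ∀ j : Fin (2 * n), HasWeakDerivAlongV n N (Xop n j) Ω u (fun x i => Du x i j)

/-- Membership in the horizontal Sobolev space `HW^{1,p}(Ω)`, with horizontal
gradient `Du`. -/
def MemHW (n N : ℕ) (Ω : Set (Hpt n)) (p : ℝ) (u : Hpt n → Fin N → ℝ)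
    (Du : Hpt n → Fin N → Fin (2 * n) → ℝ) : Prop :=
  IsHGrad n N Ω u Du ∧
    MemLp (fun x => vnorm (u x)) (ENNReal.ofReal p) (volume.restrict Ω) ∧
    MemLp (fun x => mnorm (Du x)) (ENNReal.ofReal p) (volume.restrict Ω)

/-- The `L^m(Ω)` norm. -/
def LmNorm (n : ℕ) (Ω : Set (Hpt n)) (m : ℝ) (f : Hpt n → ℝ) : ℝ :=
  (eLpNorm f (ENNReal.ofReal m) (volume.restrict Ω)).toReal

/-- The `L^∞(Ω)` norm. -/
def LinfNorm (n : ℕ) (Ω : Set (Hpt n)) (f : Hpt n → ℝ) : ℝ :=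
  (eLpNorm f ⊤ (volume.restrict Ω)).toReal

/-- The constant `κ`. -/
def kappa (n : ℕ) (Ω : Set (Hpt n)) (m : ℝ) (a b k : Hpt n → ℝ) : ℝ :=
  1 + LmNorm n Ω m b + LmNorm n Ω m k
    + LinfNorm n Ω (fun x => (a x)⁻¹) * ((LmNorm n Ω m k) ^ 2 + (LmNorm n Ω m b) ^ 2)

/-- The structure conditions (1.3)–(1.7) of the paper (the condition relating
`m` and `p` is stated separately in each theorem). -/
structure StructCond (n N : ℕ) (Ω : Set (Hpt n))
    (A : Hpt n → (Fin N → Fin (2 * n) → ℝ) → Fin N → Fin (2 * n) → ℝ)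
    (a b k : Hpt n → ℝ) (p q m cA : ℝ) : Prop where
  npos : 1 ≤ n
  bddΩ : Bornology.IsBounded Ω
  openΩ : IsOpen Ω
  hp1 : 1 < p
  hpq : p ≤ q
  hqpm : q / p < 1 + 1 / (2 * (n : ℝ) + 2) - 1 / m
  hcA : 0 < cA
  ellipticity : ∀ᵐ x ∂volume, x ∈ Ω → ∀ P U : Fin N → Fin (2 * n) → ℝ,
    a x * (1 + mnorm P ^ 2 + mnorm U ^ 2) ^ ((p - 2) / 2) * mnorm (P - U) ^ 2
      ≤ minner (A x P - A x U) (P - U)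
  growth : ∀ᵐ x ∂volume, x ∈ Ω → ∀ P U : Fin N → Fin (2 * n) → ℝ,
    mnorm (A x P - A x U)
      ≤ b x * (1 + mnorm P ^ 2 + mnorm U ^ 2) ^ ((q - 2) / 2) * mnorm (P - U)
  continuity : ∀ᵐ x ∂volume, ∀ᵐ y ∂volume, x ∈ Ω → y ∈ Ω →
    ∀ P : Fin N → Fin (2 * n) → ℝ,
    mnorm (A x P - A y P) ≤ cA * Kdist n x y * k x * (1 + mnorm P ^ 2) ^ ((q - 1) / 2)
  ha_nonneg : ∀ᵐ x ∂(volume.restrict Ω), 0 ≤ a x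
  hb_nonneg : ∀ᵐ x ∂(volume.restrict Ω), 0 ≤ b x
  hk_nonneg : ∀ᵐ x ∂(volume.restrict Ω), 0 ≤ k x
  ha_inv : MemLp (fun x => (a x)⁻¹) ⊤ (volume.restrict Ω)
  hb_m : MemLp b (ENNReal.ofReal m) (volume.restrict Ω)
  hk_m : MemLp k (ENNReal.ofReal m) (volume.restrict Ω)

/-- Weak solution of `div_H(A(x,∇_H u)) = 0` on `Ω`. -/
def IsWeakSolution (n N : ℕ) (Ω : Set (Hpt n))
    (A : Hpt n → (Fin N → Fin (2 * n) → ℝ) → Fin N → Fin (2 * n) → ℝ)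
    (u : Hpt n → Fin N → ℝ) (Du : Hpt n → Fin N → Fin (2 * n) → ℝ) : Prop :=
  ∀ φ : Hpt n → Fin N → ℝ,
    (∀ i, IsTest n Ω (fun x => φ x i)) →
    ∫ x, ∑ i, ∑ j, A x (Du x) i j * Xop n j (fun y => φ y i) x = 0

/-- Weak solution of the drift system `div_H(A(x,∇_H u)) + Tu = 0` on `Ω`,
for the fixed index `i`. -/
def IsWeakSolutionDrift (n N : ℕ) (Ω : Set (Hpt n))
    (A : Hpt n → (Fin N → Fin (2 * n) → ℝ) → Fin N → Fin (2 * n) → ℝ)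
    (u : Hpt n → Fin N → ℝ) (Du : Hpt n → Fin N → Fin (2 * n) → ℝ) (i : Fin n) : Prop :=
  ∀ φ : Hpt n → Fin N → ℝ,
    (∀ l, IsTest n Ω (fun x => φ x l)) →
    (∫ x, ∑ l, ∑ j, A x (Du x) l j * Xop n j (fun y => φ y l) x)
      + (∫ x, ∑ l, Du x l (finR n i) * Xop n (finL n i) (fun y => φ y l) x)
      - (∫ x, ∑ l, Du x l (finL n i) * Xop n (finR n i) (fun y => φ y l) x) = 0

end


section Aux

open Finset

lemma zTrans_zero (n : ℕ) (c : Hpt n) (x : Hpt n) : zTrans n c 0 x = x := by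
  simp [zTrans, Hmul]

lemma sum_scale (n : ℕ) (x c : Hpt n) (t : ℝ) :
    ∑ i : Fin n, (x.1 (finL n i) * (t * c.1 (finR n i))
      - x.1 (finR n i) * (t * c.1 (finL n i)))
    = t * ∑ i : Fin n, (x.1 (finL n i) * c.1 (finR n i)
      - x.1 (finR n i) * c.1 (finL n i)) := by
  rw [Finset.mul_sum]
  exact Finset.sum_congr rfl fun i _ => by ring

lemma sum_scale' (n : ℕ) (x c : Hpt n) (t u : ℝ) :
    ∑ i : Fin n, ((x.1 (finL n i) + u * c.1 (finL n i)) * (t * c.1 (finR n i))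
      - (x.1 (finR n i) + u * c.1 (finR n i)) * (t * c.1 (finL n i)))
    = t * ∑ i : Fin n, (x.1 (finL n i) * c.1 (finR n i)
      - x.1 (finR n i) * c.1 (finL n i)) := by
  rw [Finset.mul_sum]
  exact Finset.sum_congr rfl fun i _ => by ring

lemma zTrans_comp (n : ℕ) (c : Hpt n) (s s' : ℝ) (x : Hpt n) :
    zTrans n c s (zTrans n c s' x) = zTrans n c (s + s') x := by
  simp only [zTrans, Hmul]
  refine Prod.ext ?_ ?_
  · funext i
    simp only [Pi.add_apply, Pi.smul_apply, smul_eq_mul]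
    ring
  · simp only [Pi.add_apply, Pi.smul_apply, smul_eq_mul]
    rw [sum_scale n x c s', sum_scale' n x c s s', sum_scale n x c (s + s')]
    ring

lemma zTrans_measurePreserving (n : ℕ) (c : Hpt n) (s : ℝ) :
    MeasurePreserving (zTrans n c s) (volume : Measure (Hpt n)) volume := by
  have key : MeasurePreserving
      (fun q : (Fin (2 * n) → ℝ) × ℝ =>
        (q.1 + s • c.1,
          q.2 + (s * c.2 + 1 / 2 * ∑ i : Fin n,
            (q.1 (finL n i) * (s • c.1) (finR n i)
              - q.1 (finR n i) * (s • c.1) (finL n i)))))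
      ((volume : Measure (Fin (2 * n) → ℝ)).prod (volume : Measure ℝ))
      ((volume : Measure (Fin (2 * n) → ℝ)).prod (volume : Measure ℝ)) := by
    refine MeasurePreserving.skew_product
      (g := fun (a : Fin (2 * n) → ℝ) (t : ℝ) =>
        t + (s * c.2 + 1 / 2 * ∑ i : Fin n,
          (a (finL n i) * (s • c.1) (finR n i) - a (finR n i) * (s • c.1) (finL n i))))
      (measurePreserving_add_right volume (s • c.1)) ?_ (ae_of_all _ fun a => ?_)
    · apply Measurable.add measurable_snd
      apply Measurable.add measurable_const
      apply Measurable.const_mul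
      apply Finset.measurable_sum
      intro i _
      exact ((measurable_pi_apply _).comp measurable_fst |>.mul measurable_const).sub
        ((measurable_pi_apply _).comp measurable_fst |>.mul measurable_const)
    · exact map_add_right_eq_self volume _
  have hfun : zTrans n c s = (fun q : (Fin (2 * n) → ℝ) × ℝ =>
      (q.1 + s • c.1,
        q.2 + (s * c.2 + 1 / 2 * ∑ i : Fin n,
          (q.1 (finL n i) * (s • c.1) (finR n i)
            - q.1 (finR n i) * (s • c.1) (finL n i))))) := by
    funext q
    simp only [zTrans, Hmul]
    exact Prod.ext rfl (by ring)
  rw [hfun, show (volume : Measure (Hpt n))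
      = (volume : Measure (Fin (2 * n) → ℝ)).prod (volume : Measure ℝ) from
    rfl]
  exact key

lemma fin_comb {x A M H K t : ℝ} (hA : 0 ≤ A) (hM : 0 ≤ M) (hH : 0 < H) (hK : 0 ≤ K)
    (ht : 0 ≤ t) (hx : x ≤ 4 / H * A * t + M / 2 * K * t) :
    x ≤ (4 / H + K) * (A + M) * t := by
  have p1 : 0 ≤ 4 / H * (M * t) := by positivity
  have p2 : 0 ≤ K * (A * t) := by positivity
  have p3 : 0 ≤ K * (M * t) := by positivity
  nlinarith [p1, p2, p3]

end Aux

/-- From bounds on second Nirenberg differences to bounds on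
first differences. -/
theorem second_to_first_differences
    (n : ℕ) (hn : 1 ≤ n) (p α h M : ℝ) (hp : 1 < p)
    (hα : 0 < α) (hh : 0 < h) (hM : 0 ≤ M)
    (c₀ : Hpt n) (v : Hpt n → ℝ)
    (hv : MemLp v (ENNReal.ofReal p) volume)
    (hyp : ∀ s : ℝ, s ≠ 0 → |s| ≤ h →
      (eLpNorm (delta2 n c₀ s v) (ENNReal.ofReal p) volume).toReal ≤ M * |s| ^ α) :
    ((α < 1) → ∃ c h' : ℝ, 0 < c ∧ 0 < h' ∧
      ∀ s : ℝ, s ≠ 0 → |s| ≤ h' →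
        (eLpNorm (delta1 n c₀ s v) (ENNReal.ofReal p) volume).toReal
          ≤ c * ((eLpNorm v (ENNReal.ofReal p) volume).toReal + M) * |s| ^ α) ∧
    ((α = 1) → ∀ β : ℝ, 0 < β → β < 1 → ∃ c h' : ℝ, 0 < c ∧ 0 < h' ∧
      ∀ s : ℝ, s ≠ 0 → |s| ≤ h' →
        (eLpNorm (delta1 n c₀ s v) (ENNReal.ofReal p) volume).toReal
          ≤ c * ((eLpNorm v (ENNReal.ofReal p) volume).toReal + M) * |s| ^ β) ∧
    ((1 < α) → ∃ c h' : ℝ, 0 < c ∧ 0 < h' ∧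
      ∀ s : ℝ, s ≠ 0 → |s| ≤ h' →
        (eLpNorm (delta1 n c₀ s v) (ENNReal.ofReal p) volume).toReal
          ≤ c * ((eLpNorm v (ENNReal.ofReal p) volume).toReal + M) * |s|) := by
  classical
  set P := ENNReal.ofReal p with hPdef
  have hP1 : 1 ≤ P := by
    rw [hPdef]; exact ENNReal.one_le_ofReal.mpr hp.le
  have hmp : ∀ s : ℝ, MeasurePreserving (zTrans n c₀ s) (volume : Measure (Hpt n)) volume :=
    zTrans_measurePreserving n c₀
  have hvτ : ∀ s : ℝ, MemLp (fun x => v (zTrans n c₀ s x)) P volume := fun s =>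
    hv.comp_measurePreserving (hmp s)
  have hd1 : ∀ s : ℝ, MemLp (delta1 n c₀ s v) P volume := by
    intro s
    have e : delta1 n c₀ s v = (fun x => v (zTrans n c₀ s x)) - v := rfl
    rw [e]; exact (hvτ s).sub hv
  have hd2 : ∀ s : ℝ, MemLp (delta2 n c₀ s v) P volume := by
    intro s
    have e : delta2 n c₀ s v
        = ((fun x => v (zTrans n c₀ s x)) + fun x => v (zTrans n c₀ (-s) x))
          - fun x => 2 * v x := rfl
    rw [e]; exact ((hvτ s).add (hvτ (-s))).sub (hv.const_mul 2)
  set A := (eLpNorm v P volume).toReal with hAdef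
  have hA0 : (0:ℝ) ≤ A := ENNReal.toReal_nonneg
  set f : ℝ → ℝ := fun s => (eLpNorm (delta1 n c₀ s v) P volume).toReal with hfdef
  have hf0 : ∀ s, 0 ≤ f s := fun s => ENNReal.toReal_nonneg
  have hvfin : eLpNorm v P volume ≠ ⊤ := hv.2.ne
  have hbound : ∀ s : ℝ, f s ≤ 2 * A := by
    intro s
    have h2 : eLpNorm (fun x => v (zTrans n c₀ s x)) P volume = eLpNorm v P volume :=
      eLpNorm_comp_measurePreserving hv.1 (hmp s)
    have h1 : eLpNorm (delta1 n c₀ s v) P volume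
        ≤ eLpNorm (fun x => v (zTrans n c₀ s x)) P volume + eLpNorm v P volume := by
      have e : delta1 n c₀ s v = (fun x => v (zTrans n c₀ s x)) - v := rfl
      rw [e]; exact eLpNorm_sub_le (hvτ s).1 hv.1 hP1
    calc f s ≤ ((eLpNorm (fun x => v (zTrans n c₀ s x)) P volume
          + eLpNorm v P volume)).toReal := by
          refine ENNReal.toReal_mono ?_ h1
          rw [h2]
          exact ENNReal.add_ne_top.mpr ⟨hvfin, hvfin⟩
      _ = 2 * A := by
          rw [h2, ← two_mul, ENNReal.toReal_mul, hAdef]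
          norm_num
  have hstep : ∀ s : ℝ, s ≠ 0 → |s| ≤ h → f s ≤ f (2 * s) / 2 + M / 2 * |s| ^ α := by
    intro s hs hsh
    have hkey : delta1 n c₀ s v
        = (2⁻¹ : ℝ) • (delta1 n c₀ (2 * s) v - (delta2 n c₀ s v) ∘ (zTrans n c₀ s)) := by
      funext x
      have e1 : zTrans n c₀ s (zTrans n c₀ s x) = zTrans n c₀ (2 * s) x := by
        rw [zTrans_comp, two_mul]
      have e2 : zTrans n c₀ (-s) (zTrans n c₀ s x) = x := by
        rw [zTrans_comp, neg_add_cancel, zTrans_zero]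
      simp only [delta1, delta2, Pi.smul_apply, Pi.sub_apply, Function.comp_apply,
        e1, e2, smul_eq_mul]
      ring
    have m2 : MemLp ((delta2 n c₀ s v) ∘ (zTrans n c₀ s)) P volume :=
      (hd2 s).comp_measurePreserving (hmp s)
    have h2s : eLpNorm ((delta2 n c₀ s v) ∘ (zTrans n c₀ s)) P volume
        = eLpNorm (delta2 n c₀ s v) P volume :=
      eLpNorm_comp_measurePreserving (hd2 s).1 (hmp s)
    have hfin1 : eLpNorm (delta1 n c₀ (2 * s) v) P volume ≠ ⊤ := (hd1 (2 * s)).2.ne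
    have hfin2 : eLpNorm (delta2 n c₀ s v) P volume ≠ ⊤ := (hd2 s).2.ne
    have hsub : eLpNorm (delta1 n c₀ (2 * s) v - (delta2 n c₀ s v) ∘ (zTrans n c₀ s)) P volume
        ≤ eLpNorm (delta1 n c₀ (2 * s) v) P volume + eLpNorm (delta2 n c₀ s v) P volume := by
      refine (eLpNorm_sub_le (hd1 (2 * s)).1 m2.1 hP1).trans ?_
      rw [h2s]
    have hF : f s = 2⁻¹ * (eLpNorm
        (delta1 n c₀ (2 * s) v - (delta2 n c₀ s v) ∘ (zTrans n c₀ s)) P volume).toReal := by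
      show (eLpNorm (delta1 n c₀ s v) P volume).toReal = _
      rw [hkey, eLpNorm_const_smul, ENNReal.toReal_mul]
      norm_num
    have hle : (eLpNorm
        (delta1 n c₀ (2 * s) v - (delta2 n c₀ s v) ∘ (zTrans n c₀ s)) P volume).toReal
        ≤ f (2 * s) + (eLpNorm (delta2 n c₀ s v) P volume).toReal := by
      refine (ENNReal.toReal_mono (ENNReal.add_ne_top.mpr ⟨hfin1, hfin2⟩) hsub).trans ?_
      rw [ENNReal.toReal_add hfin1 hfin2]
    have hd2r := hyp s hs hsh
    rw [hF]
    linarith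
  have hiter : ∀ k : ℕ, ∀ s : ℝ, s ≠ 0 → (2:ℝ) ^ k * |s| ≤ 2 * h →
      f s ≤ ((2:ℝ) ^ k)⁻¹ * f ((2:ℝ) ^ k * s)
        + M / 2 * |s| ^ α * ∑ j ∈ Finset.range k, ((2:ℝ) ^ (α - 1)) ^ j := by
    intro k
    induction k with
    | zero => intro s hs _; simp
    | succ k ih =>
      intro s hs hkh
      have hpk : (0:ℝ) < 2 ^ k := by positivity
      have habs : (0:ℝ) < |s| := abs_pos.mpr hs
      have h2k1 : (2:ℝ) ^ (k + 1) = 2 ^ k * 2 := by rw [pow_succ]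
      have hsh : |s| ≤ h := by
        have h1 : (2:ℝ) * |s| ≤ 2 ^ (k + 1) * |s| := by
          have : (2:ℝ) ≤ 2 ^ (k + 1) := by
            calc (2:ℝ) = 2 ^ 1 := by norm_num
            _ ≤ 2 ^ (k + 1) := by
              apply pow_le_pow_right₀ (by norm_num); omega
          exact mul_le_mul_of_nonneg_right this habs.le
        linarith
      have e1 := hstep s hs hsh
      have h2s : (2:ℝ) ^ k * |2 * s| ≤ 2 * h := by
        rw [abs_mul, abs_two]
        calc (2:ℝ) ^ k * (2 * |s|) = 2 ^ (k + 1) * |s| := by rw [h2k1]; ring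
        _ ≤ 2 * h := hkh
      have e2 := ih (2 * s) (mul_ne_zero two_ne_zero hs) h2s
      have e3 : (2:ℝ) ^ k * (2 * s) = 2 ^ (k + 1) * s := by rw [h2k1]; ring
      rw [e3] at e2
      have e4 : |2 * s| ^ α = 2 * (2:ℝ) ^ (α - 1) * |s| ^ α := by
        rw [abs_mul, abs_two, Real.mul_rpow (by norm_num) (abs_nonneg s)]
        congr 1
        rw [← Real.rpow_one_add' (by norm_num) (by ring_nf; positivity)]
        · norm_num
      rw [e4] at e2
      have hgeom : ∑ j ∈ Finset.range (k + 1), ((2:ℝ) ^ (α - 1)) ^ j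
          = (2:ℝ) ^ (α - 1) * (∑ j ∈ Finset.range k, ((2:ℝ) ^ (α - 1)) ^ j) + 1 :=
        geom_sum_succ
      rw [hgeom]
      have hinv : ((2:ℝ) ^ (k + 1))⁻¹ = ((2:ℝ) ^ k)⁻¹ / 2 := by
        rw [h2k1]; field_simp
      rw [hinv]
      linarith
  have choose_k : ∀ s : ℝ, s ≠ 0 → |s| ≤ h → ∃ k : ℕ,
      (2:ℝ) ^ k * |s| ≤ h ∧ ((2:ℝ) ^ k)⁻¹ ≤ 2 * |s| / h ∧
        (k : ℝ) ≤ Real.logb 2 (h / |s|) := by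
    intro s hs hsh
    have hs0 : (0:ℝ) < |s| := abs_pos.mpr hs
    have hu1 : (1:ℝ) ≤ h / |s| := (one_le_div hs0).mpr hsh
    have hu0 : (0:ℝ) < h / |s| := lt_of_lt_of_le one_pos hu1
    have hlb0 : 0 ≤ Real.logb 2 (h / |s|) := Real.logb_nonneg one_lt_two hu1
    set k := ⌊Real.logb 2 (h / |s|)⌋₊ with hkdef
    have hfl : (k : ℝ) ≤ Real.logb 2 (h / |s|) := Nat.floor_le hlb0
    have hfl2 : Real.logb 2 (h / |s|) < (k : ℝ) + 1 := Nat.lt_floor_add_one _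
    have h1 : (2:ℝ) ^ k ≤ h / |s| := by
      calc (2:ℝ) ^ k = (2:ℝ) ^ ((k : ℕ) : ℝ) := by rw [Real.rpow_natCast]
      _ ≤ (2:ℝ) ^ Real.logb 2 (h / |s|) :=
          Real.rpow_le_rpow_of_exponent_le one_le_two hfl
      _ = h / |s| := Real.rpow_logb two_pos (by norm_num) hu0
    have h2 : h / |s| < (2:ℝ) ^ (k + 1) := by
      calc h / |s| = (2:ℝ) ^ Real.logb 2 (h / |s|) :=
          (Real.rpow_logb two_pos (by norm_num) hu0).symm
      _ < (2:ℝ) ^ (((k : ℕ) : ℝ) + 1) :=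
          Real.rpow_lt_rpow_of_exponent_lt one_lt_two hfl2
      _ = (2:ℝ) ^ (k + 1) := by
          rw [show ((k : ℕ) : ℝ) + 1 = (((k + 1 : ℕ) : ℕ) : ℝ) by push_cast; ring,
            Real.rpow_natCast]
    refine ⟨k, ?_, ?_, hfl⟩
    · calc (2:ℝ) ^ k * |s| ≤ (h / |s|) * |s| := mul_le_mul_of_nonneg_right h1 hs0.le
      _ = h := div_mul_cancel₀ h hs0.ne'
    · have hpk : (0:ℝ) < 2 ^ k := by positivity
      have h3 : h < (2:ℝ) ^ (k + 1) * |s| := (div_lt_iff₀ hs0).mp h2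
      rw [le_div_iff₀ hh, inv_mul_le_iff₀ hpk]
      rw [pow_succ] at h3
      nlinarith
  have main : ∀ s : ℝ, s ≠ 0 → |s| ≤ h → ∃ k : ℕ,
      (2:ℝ) ^ k * |s| ≤ h ∧ (k : ℝ) ≤ Real.logb 2 (h / |s|) ∧
      f s ≤ 2 * |s| / h * (2 * A)
        + M / 2 * |s| ^ α * ∑ j ∈ Finset.range k, ((2:ℝ) ^ (α - 1)) ^ j := by
    intro s hs hsh
    obtain ⟨k, hk1, hk2, hk3⟩ := choose_k s hs hsh
    refine ⟨k, hk1, hk3, ?_⟩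
    have hit := hiter k s hs (by linarith)
    refine hit.trans (add_le_add_left ?_ _)
    refine mul_le_mul hk2 (hbound _) (hf0 _) ?_
    positivity
  refine ⟨?_, ?_, ?_⟩
  · -- case α < 1
    intro hα1
    set r := (2:ℝ) ^ (α - 1) with hrdef
    have hr0 : 0 < r := Real.rpow_pos_of_pos two_pos _
    have hr1 : r < 1 := Real.rpow_lt_one_of_one_lt_of_neg one_lt_two (by linarith)
    have h1r : 0 < 1 - r := by linarith
    have hSle : ∀ k : ℕ, ∑ j ∈ Finset.range k, r ^ j ≤ (1 - r)⁻¹ := by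
      intro k
      rw [geom_sum_eq hr1.ne k]
      have e : (r ^ k - 1) / (r - 1) = (1 - r ^ k) / (1 - r) := by
        rw [← neg_div_neg_eq]; ring_nf
      rw [e, ← one_div, div_le_div_iff₀ h1r h1r]
      nlinarith [pow_nonneg hr0.le k]
    have hHpos : (0:ℝ) < h ^ α := Real.rpow_pos_of_pos hh _
    refine ⟨4 / h ^ α + (1 - r)⁻¹, h, by positivity, hh, ?_⟩
    intro s hs hsh
    obtain ⟨k, hk1, hk2, hmain⟩ := main s hs hsh
    have hs0 : (0:ℝ) < |s| := abs_pos.mpr hs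
    have ht0 : (0:ℝ) < |s| ^ α := Real.rpow_pos_of_pos hs0 _
    have hst : |s| ≤ h ^ (1 - α) * |s| ^ α := by
      have e : |s| = |s| ^ (1 - α) * |s| ^ α := by
        rw [← Real.rpow_add hs0]; norm_num
      conv_lhs => rw [e]
      have hexp : (0:ℝ) ≤ 1 - α := by linarith
      exact mul_le_mul_of_nonneg_right
        (Real.rpow_le_rpow hs0.le hsh hexp) ht0.le
    have hhα : h ^ (1 - α) * h ^ α = h := by
      rw [← Real.rpow_add hh]; norm_num
    have hterm1 : 2 * |s| / h * (2 * A) ≤ 4 / h ^ α * A * |s| ^ α := by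
      have base : |s| / h ≤ |s| ^ α / h ^ α := by
        rw [div_le_div_iff₀ hh hHpos]
        calc |s| * h ^ α ≤ (h ^ (1 - α) * |s| ^ α) * h ^ α :=
            mul_le_mul_of_nonneg_right hst hHpos.le
        _ = |s| ^ α * h := by rw [mul_comm (h ^ (1 - α)) (|s| ^ α), mul_assoc, hhα]
      calc 2 * |s| / h * (2 * A) = 4 * A * (|s| / h) := by ring
      _ ≤ 4 * A * (|s| ^ α / h ^ α) :=
          mul_le_mul_of_nonneg_left base (by linarith)
      _ = 4 / h ^ α * A * |s| ^ α := by ring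
    have hterm2 : M / 2 * |s| ^ α * (∑ j ∈ Finset.range k, r ^ j)
        ≤ M / 2 * (1 - r)⁻¹ * |s| ^ α := by
      calc M / 2 * |s| ^ α * (∑ j ∈ Finset.range k, r ^ j)
          ≤ M / 2 * |s| ^ α * (1 - r)⁻¹ :=
            mul_le_mul_of_nonneg_left (hSle k) (by positivity)
      _ = M / 2 * (1 - r)⁻¹ * |s| ^ α := by ring
    show f s ≤ _
    refine fin_comb hA0 hM hHpos (by positivity) ht0.le ?_
    calc f s ≤ 2 * |s| / h * (2 * A)
          + M / 2 * |s| ^ α * ∑ j ∈ Finset.range k, r ^ j := hmain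
    _ ≤ 4 / h ^ α * A * |s| ^ α + M / 2 * (1 - r)⁻¹ * |s| ^ α := by
        exact add_le_add hterm1 hterm2
  · -- case α = 1
    intro hα1 β hβ0 hβ1
    subst hα1
    have hlog2 : (0:ℝ) < Real.log 2 := Real.log_pos one_lt_two
    have h1β : (0:ℝ) < 1 - β := by linarith
    have hHpos : (0:ℝ) < h ^ β := Real.rpow_pos_of_pos hh _
    have hGpos : (0:ℝ) < h ^ (1 - β) := Real.rpow_pos_of_pos hh _
    set K := h ^ (1 - β) / ((1 - β) * Real.log 2) with hKdef
    have hKpos : 0 < K := by positivity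
    refine ⟨4 / h ^ β + K, h, by positivity, hh, ?_⟩
    intro s hs hsh
    obtain ⟨k, hk1, hk2, hmain⟩ := main s hs hsh
    simp only [sub_self, Real.rpow_zero, one_pow, Finset.sum_const, Finset.card_range,
      nsmul_eq_mul, smul_eq_mul, mul_one, Real.rpow_one] at hmain
    have hs0 : (0:ℝ) < |s| := abs_pos.mpr hs
    have hu0 : (0:ℝ) < h / |s| := by positivity
    have ht0 : (0:ℝ) < |s| ^ β := Real.rpow_pos_of_pos hs0 _
    have hst : |s| ≤ h ^ (1 - β) * |s| ^ β := by
      have e : |s| = |s| ^ (1 - β) * |s| ^ β := by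
        rw [← Real.rpow_add hs0]; norm_num
      conv_lhs => rw [e]
      exact mul_le_mul_of_nonneg_right
        (Real.rpow_le_rpow hs0.le hsh h1β.le) ht0.le
    have hhβ : h ^ (1 - β) * h ^ β = h := by
      rw [← Real.rpow_add hh]; norm_num
    have hterm1 : 2 * |s| / h * (2 * A) ≤ 4 / h ^ β * A * |s| ^ β := by
      have base : |s| / h ≤ |s| ^ β / h ^ β := by
        rw [div_le_div_iff₀ hh hHpos]
        calc |s| * h ^ β ≤ (h ^ (1 - β) * |s| ^ β) * h ^ β :=
            mul_le_mul_of_nonneg_right hst hHpos.le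
        _ = |s| ^ β * h := by rw [mul_comm (h ^ (1 - β)) (|s| ^ β), mul_assoc, hhβ]
      calc 2 * |s| / h * (2 * A) = 4 * A * (|s| / h) := by ring
      _ ≤ 4 * A * (|s| ^ β / h ^ β) := mul_le_mul_of_nonneg_left base (by linarith)
      _ = 4 / h ^ β * A * |s| ^ β := by ring
    have hks : (k : ℝ) * |s| ≤ K * |s| ^ β := by
      have hlogle : Real.log (h / |s|) ≤ (h / |s|) ^ (1 - β) / (1 - β) :=
        Real.log_le_rpow_div hu0.le h1β
      have hkle : (k : ℝ) ≤ (h / |s|) ^ (1 - β) / ((1 - β) * Real.log 2) := by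
        have e : Real.logb 2 (h / |s|) = Real.log (h / |s|) / Real.log 2 := rfl
        rw [e] at hk2
        calc (k : ℝ) ≤ Real.log (h / |s|) / Real.log 2 := hk2
        _ ≤ ((h / |s|) ^ (1 - β) / (1 - β)) / Real.log 2 := by
            exact (div_le_div_iff_of_pos_right hlog2).mpr hlogle
        _ = (h / |s|) ^ (1 - β) / ((1 - β) * Real.log 2) := by
            rw [div_div]
      have hdiv : (h / |s|) ^ (1 - β) * |s| = h ^ (1 - β) * |s| ^ β := by
        rw [Real.div_rpow hh.le (abs_nonneg s), div_mul_eq_mul_div, mul_div_assoc]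
        congr 1
        have hne : |s| ^ (1 - β) ≠ 0 := (Real.rpow_pos_of_pos hs0 _).ne'
        rw [div_eq_iff hne, ← Real.rpow_add hs0]
        norm_num
      calc (k : ℝ) * |s| ≤ ((h / |s|) ^ (1 - β) / ((1 - β) * Real.log 2)) * |s| :=
          mul_le_mul_of_nonneg_right hkle hs0.le
      _ = ((h / |s|) ^ (1 - β) * |s|) / ((1 - β) * Real.log 2) := by ring
      _ = K * |s| ^ β := by rw [hdiv, hKdef]; ring
    show f s ≤ _
    refine fin_comb hA0 hM hHpos hKpos.le ht0.le ?_
    calc f s ≤ 2 * |s| / h * (2 * A) + M / 2 * |s| * k := hmain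
    _ ≤ 4 / h ^ β * A * |s| ^ β + M / 2 * (K * |s| ^ β) := by
        refine add_le_add hterm1 ?_
        calc M / 2 * |s| * k = M / 2 * ((k : ℝ) * |s|) := by ring
        _ ≤ M / 2 * (K * |s| ^ β) :=
            mul_le_mul_of_nonneg_left hks (by linarith)
    _ = 4 / h ^ β * A * |s| ^ β + M / 2 * K * |s| ^ β := by ring
  · -- case 1 < α
    intro hα1
    set r := (2:ℝ) ^ (α - 1) with hrdef
    have hr0 : 0 < r := Real.rpow_pos_of_pos two_pos _
    have hr1 : 1 < r := by
      rw [hrdef]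
      exact Real.one_lt_rpow_iff_of_pos two_pos |>.mpr (Or.inl ⟨one_lt_two, by linarith⟩)
    have hr1' : (0:ℝ) < r - 1 := by linarith
    set K := h ^ (α - 1) / (r - 1) with hKdef
    have hKpos : 0 < K := by
      have : (0:ℝ) < h ^ (α - 1) := Real.rpow_pos_of_pos hh _
      positivity
    refine ⟨4 / h + K, h, by positivity, hh, ?_⟩
    intro s hs hsh
    obtain ⟨k, hk1, hk2, hmain⟩ := main s hs hsh
    have hs0 : (0:ℝ) < |s| := abs_pos.mpr hs
    have hpk : (0:ℝ) < 2 ^ k := by positivity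
    have hSle : ∑ j ∈ Finset.range k, r ^ j ≤ r ^ k / (r - 1) := by
      rw [geom_sum_eq hr1.ne' k, div_le_div_iff₀ hr1' hr1']
      nlinarith
    have hrk : r ^ k = ((2:ℝ) ^ k) ^ (α - 1) := by
      rw [hrdef, ← Real.rpow_natCast ((2:ℝ) ^ (α - 1)) k, ← Real.rpow_natCast (2:ℝ) k,
        ← Real.rpow_mul (by norm_num), ← Real.rpow_mul (by norm_num), mul_comm]
    have hpow : |s| ^ α * r ^ k ≤ h ^ (α - 1) * |s| := by
      have e1 : |s| ^ α = |s| * |s| ^ (α - 1) := by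
        nth_rewrite 1 [show α = 1 + (α - 1) by ring]
        rw [Real.rpow_add hs0, Real.rpow_one]
      rw [e1, hrk, mul_assoc, ← Real.mul_rpow (abs_nonneg s) hpk.le]
      have e2 : (|s| * 2 ^ k) ^ (α - 1) ≤ h ^ (α - 1) := by
        apply Real.rpow_le_rpow (by positivity) _ (by linarith)
        calc |s| * 2 ^ k = 2 ^ k * |s| := by ring
        _ ≤ h := hk1
      calc |s| * (|s| * 2 ^ k) ^ (α - 1) ≤ |s| * h ^ (α - 1) :=
          mul_le_mul_of_nonneg_left e2 hs0.le
      _ = h ^ (α - 1) * |s| := by ring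
    have hterm2 : M / 2 * |s| ^ α * (∑ j ∈ Finset.range k, r ^ j)
        ≤ M / 2 * K * |s| := by
      have ht0 : (0:ℝ) ≤ |s| ^ α := (Real.rpow_pos_of_pos hs0 _).le
      calc M / 2 * |s| ^ α * (∑ j ∈ Finset.range k, r ^ j)
          ≤ M / 2 * |s| ^ α * (r ^ k / (r - 1)) :=
            mul_le_mul_of_nonneg_left hSle (by positivity)
      _ = M / 2 * ((|s| ^ α * r ^ k) / (r - 1)) := by ring
      _ ≤ M / 2 * ((h ^ (α - 1) * |s|) / (r - 1)) := by
          refine mul_le_mul_of_nonneg_left ?_ (by linarith)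
          exact (div_le_div_iff_of_pos_right hr1').mpr hpow
      _ = M / 2 * K * |s| := by rw [hKdef]; ring
    show f s ≤ _
    refine fin_comb hA0 hM hh hKpos.le hs0.le ?_
    calc f s ≤ 2 * |s| / h * (2 * A)
          + M / 2 * |s| ^ α * ∑ j ∈ Finset.range k, r ^ j := hmain
    _ ≤ 2 * |s| / h * (2 * A) + M / 2 * K * |s| := add_le_add_right hterm2 _
    _ = 4 / h * A * |s| + M / 2 * K * |s| := by ring
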